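/- arXiv:2312.10735 — 9 statements merged into one kernel-verified Lean document; each statement's English description precedes it below -/
import Mathlib

section
/- Let F ⊆ 2^ω be a filter on ω with the Baire property in 2^ω. Then F is meager in 2^ω. -/
/-!
Topological zero-one law: a set `S` of Cantor space that is invariant under finite modifications
and has the Baire property is meagre or comeagre. If `S` is not meagre, it is comeagre in some
basic cylinder `C`; the images of the meagre set `C \ S` under the finitely many flips of
coordinates in the support of `C` are meagre, and by invariance they cover the complement of `S`.
A filter cannot be comeagre, because complementing every coordinate is a homeomorphism: a comeagre
filter would contain some `x` together with its complement, hence also their intersection `∅`.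
-/

open Set Topology Filter

variable {ι : Type*}

def IsFiniteModInvariant (S : Set (ι → Bool)) : Prop :=
  ∀ x ∈ S, ∀ y : ι → Bool, {i | x i ≠ y i}.Finite → y ∈ S

def xorHomeomorph (d : ι → Bool) : (ι → Bool) ≃ₜ (ι → Bool) where
  toFun x i := xor (x i) (d i)
  invFun x i := xor (x i) (d i)
  left_inv x := by funext i; simp
  right_inv x := by funext i; simp
  continuous_toFun := continuous_pi fun i =>
    (continuous_of_discreteTopology (f := (xor · (d i)))).comp (continuous_apply i)
  continuous_invFun := continuous_pi fun i =>
    (continuous_of_discreteTopology (f := (xor · (d i)))).comp (continuous_apply i)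

@[simp]
theorem xorHomeomorph_apply (d x : ι → Bool) (i : ι) : xorHomeomorph d x i = xor (x i) (d i) :=
  rfl

theorem compl_subset_biUnion_xorHomeomorph_preimage [DecidableEq ι] {S : Set (ι → Bool)}
    (hS : IsFiniteModInvariant S) (x : ι → Bool) (I : Finset ι) :
    Sᶜ ⊆ ⋃ J ∈ I.powerset,
      xorHomeomorph (fun i => decide (i ∈ J)) ⁻¹' ({y | ∀ i ∈ I, y i = x i} \ S) := by
  intro y hy
  -- flip `y` where it disagrees with `x` on `I`: this lands in the cylinder and changes only `I`
  refine mem_biUnion (x := I.filter fun i => y i ≠ x i)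
    (Finset.mem_powerset.2 (Finset.filter_subset _ _)) ⟨?_, ?_⟩
  · intro i hi
    by_cases h : y i = x i <;> simp_all [Bool.eq_not_iff]
  · intro hflip
    refine hy (hS _ hflip y (I.finite_toSet.subset fun i hi => ?_))
    by_contra h
    simp_all

theorem isMeagre_or_mem_residual_of_isFiniteModInvariant {S : Set (ι → Bool)}
    (hS : IsFiniteModInvariant S)
    (hBP : ∃ U : Set (ι → Bool), IsOpen U ∧ IsMeagre (symmDiff S U)) :
    IsMeagre S ∨ S ∈ residual (ι → Bool) := by
  classical
  obtain ⟨U, hUo, hSU⟩ := hBP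
  rcases U.eq_empty_or_nonempty with rfl | ⟨x, hx⟩
  · exact .inl (by rwa [← bot_eq_empty, symmDiff_bot] at hSU)
  obtain ⟨I, u, hu, hIU⟩ := isOpen_pi_iff.1 hUo x hx
  have hcyl : {y | ∀ i ∈ I, y i = x i} ⊆ U := fun y hy => hIU fun i hi => hy i hi ▸ (hu i hi).2
  have hcyl_diff_meagre : IsMeagre ({y | ∀ i ∈ I, y i = x i} \ S) :=
    hSU.mono fun y hy => .inr ⟨hcyl hy.1, hy.2⟩
  have hSc : IsMeagre Sᶜ := by
    refine (isMeagre_biUnion I.powerset.countable_toSet fun J _ => ?_).mono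
      (compl_subset_biUnion_xorHomeomorph_preimage hS x I)
    exact hcyl_diff_meagre.preimage_of_isOpenMap (xorHomeomorph _).continuous
      (xorHomeomorph _).isOpenMap
  exact .inr (compl_compl S ▸ hSc)

theorem notMem_residual_of_forall_and_mem {F : Set (ι → Bool)} (hempty : (fun _ => false) ∉ F)
    (hinter : ∀ x ∈ F, ∀ y ∈ F, (fun i => x i && y i) ∈ F) : F ∉ residual (ι → Bool) := by
  intro hF
  let σ := xorHomeomorph fun _ : ι => true
  have hσF : σ ⁻¹' F ∈ residual (ι → Bool) :=
    tendsto_residual_of_isOpenMap σ.continuous σ.isOpenMap hF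
  obtain ⟨y, hy, hσy⟩ := (dense_of_mem_residual (inter_mem hF hσF)).nonempty
  refine hempty ?_
  convert hinter y hy (σ y) hσy using 1
  funext i
  simp [σ]

theorem statement6_general (F : Set (ℕ → Bool))
    (hempty : (fun _ => false) ∉ F)
    (hmod : ∀ x ∈ F, ∀ y : ℕ → Bool, {n | x n ≠ y n}.Finite → y ∈ F)
    (hinter : ∀ x ∈ F, ∀ y ∈ F, (fun n => x n && y n) ∈ F)
    (hBP : ∃ U : Set (ℕ → Bool), IsOpen U ∧ IsMeagre (symmDiff F U)) :
    IsMeagre F :=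
  (isMeagre_or_mem_residual_of_isFiniteModInvariant hmod hBP).resolve_right
    (notMem_residual_of_forall_and_mem hempty hinter)

/-- Every filter on `ω` (viewed as a subset of the Cantor space `2^ω = ℕ → Bool`
via characteristic functions) with the Baire property is meager in `2^ω`. -/
theorem statement6 (F : Set (ℕ → Bool))
    (hempty : (fun _ => false) ∉ F)
    (huniv : (fun _ => true) ∈ F)
    (hmod : ∀ x ∈ F, ∀ y : ℕ → Bool, {n | x n ≠ y n}.Finite → y ∈ F)
    (hup : ∀ x ∈ F, ∀ y : ℕ → Bool, (∀ n, x n = true → y n = true) → y ∈ F)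
    (hinter : ∀ x ∈ F, ∀ y ∈ F, (fun n => x n && y n) ∈ F)
    (hBP : ∃ U : Set (ℕ → Bool), IsOpen U ∧ IsMeagre (symmDiff F U)) :
    IsMeagre F :=
  statement6_general F hempty hmod hinter hBP
end

section
/- Let Z be a Polish space, and let X be a dense subspace of Z that is a Baire space (in its subspace topology) and has the Baire property in Z. Then X is comeager in Z. -/
open Set Topology

/-- If `X` is dense in `Z` and `N` is nowhere dense in `Z`, then the preimage of `N`
in the subspace `X` is nowhere dense in `X`. -/
lemma aux_nwd_preimage {Z : Type*} [TopologicalSpace Z] {X : Set Z} (hdense : Dense X)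
    {N : Set Z} (hN : IsNowhereDense N) :
    IsNowhereDense ((Subtype.val : X → Z) ⁻¹' N) := by
  rw [IsNowhereDense, eq_empty_iff_forall_notMem]
  rintro x hx
  have hsub : closure ((Subtype.val : X → Z) ⁻¹' N) ⊆ Subtype.val ⁻¹' closure N :=
    continuous_subtype_val.closure_preimage_subset N
  have hx' : x ∈ interior ((Subtype.val : X → Z) ⁻¹' closure N) :=
    interior_mono hsub hx
  rw [mem_interior_iff_mem_nhds, mem_nhds_subtype] at hx'
  obtain ⟨t, ht, hts⟩ := hx'
  obtain ⟨W, hWt, hWopen, hxW⟩ := mem_nhds_iff.mp ht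
  -- W ∩ X ⊆ closure N
  have h1 : W ∩ X ⊆ closure N := by
    rintro z ⟨hzW, hzX⟩
    exact hts (show (⟨z, hzX⟩ : X).1 ∈ t from hWt hzW)
  have h2 : W ⊆ closure N := by
    calc W ⊆ closure (W ∩ X) := hdense.open_subset_closure_inter hWopen
    _ ⊆ closure (closure N) := closure_mono h1
    _ = closure N := closure_closure
  have : (x : Z) ∈ interior (closure N) :=
    mem_interior.mpr ⟨W, h2, hWopen, hxW⟩
  rw [hN] at this
  exact this

/-- If `Z` is Polish and `X ⊆ Z` is dense, a Baire space in its subspace topology,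
and has the Baire property in `Z`, then `X` is comeager in `Z`. -/
theorem statement7 {Z : Type*} [TopologicalSpace Z] [PolishSpace Z]
    (X : Set Z) (hdense : Dense X) (hBaire : BaireSpace ↥X)
    (hBP : ∃ U : Set Z, IsOpen U ∧ IsMeagre (symmDiff X U)) :
    IsMeagre Xᶜ := by
  obtain ⟨U, hUopen, hUmeagre⟩ := hBP
  have hXU : X \ U ⊆ symmDiff X U := fun z hz => Or.inl hz
  -- `U` is dense
  have hUdense : Dense U := by
    rw [dense_iff_inter_open]
    intro V hVopen hVne
    by_contra h
    have hVU : V ∩ U = ∅ := not_nonempty_iff_eq_empty.mp h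
    -- the preimage of V in X is meagre in X
    have hm : IsMeagre ((Subtype.val : X → Z) ⁻¹' V) := by
      rw [isMeagre_iff_countable_union_isNowhereDense] at hUmeagre ⊢
      obtain ⟨S, hS1, hS2, hS3⟩ := hUmeagre
      refine ⟨(fun t => (Subtype.val : X → Z) ⁻¹' t) '' S, ?_, hS2.image _, ?_⟩
      · rintro _ ⟨t, htS, rfl⟩
        exact aux_nwd_preimage hdense (hS1 t htS)
      · rintro x hxV
        have hxd : (x : Z) ∈ symmDiff X U := by
          refine hXU ⟨x.2, fun hxU => ?_⟩
          have : (x : Z) ∈ V ∩ U := ⟨hxV, hxU⟩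
          rw [hVU] at this
          exact this
        obtain ⟨t, htS, hxt⟩ := mem_sUnion.mp (hS3 hxd)
        exact mem_sUnion.mpr ⟨_, mem_image_of_mem _ htS, hxt⟩
    -- contradiction with Baire
    have hd : Dense ((Subtype.val : X → Z) ⁻¹' V)ᶜ := by
      refine dense_of_mem_residual ?_
      exact hm
    -- but the preimage of V is open and nonempty in X
    obtain ⟨z, hzV, hzX⟩ := hdense.inter_open_nonempty V hVopen hVne
    have hopen : IsOpen ((Subtype.val : X → Z) ⁻¹' V) := hVopen.preimage continuous_subtype_val
    obtain ⟨y, hy1, hy2⟩ := hd.inter_open_nonempty _ hopen ⟨⟨z, hzX⟩, hzV⟩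
    exact hy2 hy1
  -- `Uᶜ` is meagre
  have h1 : IsMeagre Uᶜ := by
    rw [IsMeagre, compl_compl]
    exact residual_of_dense_open hUopen hUdense
  have h2 : IsMeagre (Uᶜ ∪ symmDiff X U) := by
    rw [IsMeagre, compl_union]
    exact (residual Z).inter_mem h1 hUmeagre
  refine h2.mono fun z hz => ?_
  by_cases hzU : z ∈ U
  · exact Or.inr (Or.inr ⟨hzU, hz⟩)
  · exact Or.inl hzU
end

section
/- Every strongly homogeneous (separable metrizable) space is homogeneous. -/
/-!
Fix a clopen neighbourhood basis `U₀ = X ⊇ U₁ ⊇ U₂ ⊇ ⋯` at `x` whose shells `Uₙ \ Uₙ₊₁` are all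
non-empty, and a similar basis `Vₙ` at `y`; these exist because `X` is first countable, has a clopen
basis and (unless it is a point) no isolated points. The shells are non-empty clopen sets, so
strong homogeneity makes the `n`-th shells at `x` and at `y` homeomorphic to `X`, hence to each
other. Gluing these homeomorphisms and sending `x` to `y` gives a bijection `X → X`; it is
continuous on each open shell, and continuous at `x` because it maps `Uₙ` into `Vₙ`.
-/

open Set Filter Topology TopologicalSpace Function

theorem Filter.HasAntitoneBasis.update_zero_univ {α : Type*} {l : Filter α} {s : ℕ → Set α}
    (hs : l.HasAntitoneBasis s) : l.HasAntitoneBasis (update s 0 univ) where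
  toHasBasis := hs.toHasBasis.to_hasBasis
    (fun n _ => ⟨n + 1, trivial, by simpa using hs.antitone n.le_succ⟩)
    (fun n _ => ⟨n, trivial, by rcases n with _ | n <;> simp⟩)
  antitone m n hmn := by
    rcases m with _ | m
    · simp
    · rcases n with _ | n
      · omega
      · simpa using hs.antitone hmn

namespace StrongHomogeneity

variable {X Y : Type*} [TopologicalSpace X] [TopologicalSpace Y]

def shell {α : Type*} (U : ℕ → Set α) (n : ℕ) : Set α := U n \ U (n + 1)

theorem eq_of_mem_shell {α : Type*} {U : ℕ → Set α} (hU : Antitone U) {z : α} {m n : ℕ}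
    (hm : z ∈ shell U m) (hn : z ∈ shell U n) : m = n := by
  by_contra hne
  rcases Nat.lt_or_gt_of_ne hne with h | h
  · exact hm.2 (hU h hn.1)
  · exact hn.2 (hU h hm.1)

theorem forall_mem_or_exists_mem_shell {α : Type*} {U : ℕ → Set α} (h0 : U 0 = univ) (z : α) :
    (∀ n, z ∈ U n) ∨ ∃ n, z ∈ shell U n := by
  by_contra! h
  obtain ⟨n, hn⟩ := h.1
  induction n with
  | zero => exact hn (h0 ▸ mem_univ z)
  | succ k ih => exact ih fun hk => h.2 k ⟨hk, hn⟩

structure IsClopenShellBasis (x : X) (U : ℕ → Set X) : Prop where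
  zero_eq_univ : U 0 = univ
  isClopen : ∀ n, IsClopen (U n)
  hasAntitoneBasis : (𝓝 x).HasAntitoneBasis U

namespace IsClopenShellBasis

variable {x : X} {U : ℕ → Set X}

theorem antitone (hU : IsClopenShellBasis x U) : Antitone U := hU.hasAntitoneBasis.antitone

theorem mem (hU : IsClopenShellBasis x U) (n : ℕ) : x ∈ U n :=
  mem_of_mem_nhds (hU.hasAntitoneBasis.mem n)

theorem eq_of_forall_mem [T1Space X] (hU : IsClopenShellBasis x U) {z : X}
    (hz : ∀ n, z ∈ U n) : z = x := by
  by_contra hzx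
  obtain ⟨n, hn⟩ := hU.hasAntitoneBasis.mem_iff.1 (compl_singleton_mem_nhds (Ne.symm hzx))
  exact hn (hz n) rfl

theorem isClopen_shell (hU : IsClopenShellBasis x U) (n : ℕ) : IsClopen (shell U n) :=
  (hU.isClopen n).diff (hU.isClopen (n + 1))

end IsClopenShellBasis

section Glue

variable {U : ℕ → Set X} {V : ℕ → Set Y} (e : ∀ n, shell U n ≃ₜ shell V n) (y : Y)

open scoped Classical in
noncomputable def glue (z : X) : Y :=
  if hz : ∃ n, z ∈ shell U n then e (Nat.find hz) ⟨z, Nat.find_spec hz⟩ else y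

variable {e y}

theorem glue_apply_of_mem_shell (hU : Antitone U) {z : X} {n : ℕ} (hz : z ∈ shell U n) :
    glue e y z = e n ⟨z, hz⟩ := by
  classical
  have hex : ∃ m, z ∈ shell U m := ⟨n, hz⟩
  obtain rfl : Nat.find hex = n := eq_of_mem_shell hU (Nat.find_spec hex) hz
  simp only [glue, dif_pos hex]

theorem glue_apply_of_forall_mem {z : X} (hz : ∀ n, z ∈ U n) : glue e y z = y :=
  dif_neg fun ⟨n, hn⟩ => hn.2 (hz (n + 1))

theorem mapsTo_glue (hU : Antitone U) (h0 : U 0 = univ) (hV : Antitone V) (hy : ∀ n, y ∈ V n)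
    (n : ℕ) : MapsTo (glue e y) (U n) (V n) := by
  intro z hz
  rcases forall_mem_or_exists_mem_shell h0 z with hall | ⟨m, hm⟩
  · rw [glue_apply_of_forall_mem hall]
    exact hy n
  · have hnm : n ≤ m := by
      by_contra! hmn
      exact hm.2 (hU hmn hz)
    rw [glue_apply_of_mem_shell hU hm]
    exact hV hnm (e m ⟨z, hm⟩).2.1

variable {x : X}

theorem glue_symm_glue [T1Space X] (hU : IsClopenShellBasis x U) (hV : Antitone V)
    (hy : ∀ n, y ∈ V n) (z : X) : glue (fun n => (e n).symm) x (glue e y z) = z := by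
  rcases forall_mem_or_exists_mem_shell hU.zero_eq_univ z with hall | ⟨n, hn⟩
  · rw [glue_apply_of_forall_mem hall, glue_apply_of_forall_mem hy, hU.eq_of_forall_mem hall]
  · rw [glue_apply_of_mem_shell hU.antitone hn, glue_apply_of_mem_shell hV (e n ⟨z, hn⟩).2]
    simp

theorem continuous_glue (hU : IsClopenShellBasis x U) (hV : IsClopenShellBasis y V) :
    Continuous (glue e y) := by
  refine continuous_iff_continuousAt.2 fun z => ?_
  rcases forall_mem_or_exists_mem_shell hU.zero_eq_univ z with hall | ⟨n, hn⟩
  · rw [ContinuousAt, glue_apply_of_forall_mem hall]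
    refine hV.hasAntitoneBasis.tendsto_right_iff.2 fun m _ => ?_
    exact mem_of_superset ((hU.isClopen m).isOpen.mem_nhds (hall m))
      (mapsTo_glue hU.antitone hU.zero_eq_univ hV.antitone hV.mem m)
  · have hcont : ContinuousOn (glue e y) (shell U n) := by
      rw [continuousOn_iff_continuous_domRestrict]
      convert continuous_subtype_val.comp (e n).continuous using 1
      funext w
      exact glue_apply_of_mem_shell hU.antitone w.2
    exact hcont.continuousAt ((hU.isClopen_shell n).isOpen.mem_nhds hn)

end Glue

namespace IsClopenShellBasis

variable {x : X} {y : Y} {U : ℕ → Set X} {V : ℕ → Set Y}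

noncomputable def homeomorph [T1Space X] [T1Space Y] (hU : IsClopenShellBasis x U)
    (hV : IsClopenShellBasis y V) (e : ∀ n, shell U n ≃ₜ shell V n) : X ≃ₜ Y where
  toFun := glue e y
  invFun := glue (fun n => (e n).symm) x
  left_inv := glue_symm_glue hU hV.antitone hV.mem
  right_inv z := by simpa using glue_symm_glue (e := fun n => (e n).symm) hV hU.antitone hU.mem z
  continuous_toFun := continuous_glue hU hV
  continuous_invFun := continuous_glue hV hU

theorem homeomorph_apply_self [T1Space X] [T1Space Y] (hU : IsClopenShellBasis x U)
    (hV : IsClopenShellBasis y V) (e : ∀ n, shell U n ≃ₜ shell V n) :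
    hU.homeomorph hV e x = y :=
  glue_apply_of_forall_mem hU.mem

end IsClopenShellBasis

theorem exists_isClopenShellBasis [T1Space X] [FirstCountableTopology X]
    [∀ z : X, (𝓝[≠] z).NeBot] (hbasis : IsTopologicalBasis {s : Set X | IsClopen s}) (x : X) :
    ∃ U, IsClopenShellBasis x U ∧ ∀ n, (shell U n).Nonempty := by
  obtain ⟨W, hWc, hW⟩ := (hbasis.nhds_hasBasis (a := x)).exists_antitone_subbasis
  have hgap : ∀ m, ∀ᶠ n in atTop, (W m \ W n).Nonempty := fun m => by
    obtain ⟨z, hzW, hzx⟩ := Filter.nonempty_of_mem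
      (inter_mem (nhdsWithin_le_nhds (hW.mem m)) (self_mem_nhdsWithin (s := {x}ᶜ)))
    exact (hW.eventually_subset (compl_singleton_mem_nhds (Ne.symm hzx))).mono
      fun n hn => ⟨z, hzW, fun hz => hn hz rfl⟩
  obtain ⟨φ, -, hφ, hWφ⟩ := hW.subbasis_with_rel hgap
  refine ⟨update (W ∘ φ) 0 univ, ⟨by simp, fun n => ?_, hWφ.update_zero_univ⟩, fun n => ?_⟩
  · rcases n with _ | n
    · simpa using isClopen_univ
    · simpa using (hWc _).1
  · obtain ⟨z, hz, hz'⟩ := hφ n.lt_succ_self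
    refine ⟨z, ?_, by simpa using hz'⟩
    rcases n with _ | n <;> simp [hz]

theorem nhdsNE_neBot_of_forall_homeomorph [T1Space X] [Nontrivial X]
    (hstrong : ∀ U : Set X, IsClopen U → U.Nonempty → Nonempty (↥U ≃ₜ X)) (x : X) :
    (𝓝[≠] x).NeBot := by
  refine ⟨fun hx => not_subsingleton X ?_⟩
  obtain ⟨e⟩ := hstrong {x} ⟨isClosed_singleton, (isOpen_singleton_iff_punctured_nhds x).2 hx⟩
    (singleton_nonempty x)
  exact e.symm.toEquiv.subsingleton

end StrongHomogeneity

open StrongHomogeneity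

theorem statement8_general {X : Type*} [TopologicalSpace X]
    [TopologicalSpace.MetrizableSpace X]
    (hbasis : TopologicalSpace.IsTopologicalBasis {s : Set X | IsClopen s})
    (hstrong : ∀ U : Set X, IsClopen U → U.Nonempty → Nonempty (↥U ≃ₜ X)) :
    ∀ x y : X, ∃ h : X ≃ₜ X, h x = y := by
  intro x y
  rcases subsingleton_or_nontrivial X with _ | _
  · exact ⟨Homeomorph.refl X, Subsingleton.elim x y⟩
  have := nhdsNE_neBot_of_forall_homeomorph hstrong
  obtain ⟨U, hU, hUne⟩ := exists_isClopenShellBasis hbasis x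
  obtain ⟨V, hV, hVne⟩ := exists_isClopenShellBasis hbasis y
  have e n : shell U n ≃ₜ shell V n :=
    (hstrong _ (hU.isClopen_shell n) (hUne n)).some.trans
      (hstrong _ (hV.isClopen_shell n) (hVne n)).some.symm
  exact ⟨hU.homeomorph hV e, hU.homeomorph_apply_self hV e⟩

/-- Every strongly homogeneous separable metrizable space is homogeneous: if `X` is
zero-dimensional (non-empty with a base of clopen sets) and every non-empty clopen
subspace of `X` is homeomorphic to `X`, then for all `x y : X` there is a
self-homeomorphism of `X` sending `x` to `y`. -/
theorem statement8 {X : Type*} [TopologicalSpace X]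
    [TopologicalSpace.MetrizableSpace X] [TopologicalSpace.SeparableSpace X]
    [Nonempty X]
    (hbasis : TopologicalSpace.IsTopologicalBasis {s : Set X | IsClopen s})
    (hstrong : ∀ U : Set X, IsClopen U → U.Nonempty → Nonempty (↥U ≃ₜ X)) :
    ∀ x y : X, ∃ h : X ≃ₜ X, h x = y :=
  statement8_general hbasis hstrong
end

section
/- Every subspace X of 2^ω that is closed under finite modifications is homogeneous. In particular, every semifilter on ω, viewed as a subspace of 2^ω, is homogeneous. -/
/-- A semifilter, as a set of characteristic functions in `2^ω = ℕ → Bool`. -/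
def IsSemifilterB (S : Set (ℕ → Bool)) : Prop :=
  (fun _ => false) ∉ S ∧ (fun _ => true) ∈ S ∧
    (∀ x ∈ S, ∀ y : ℕ → Bool, {n | x n ≠ y n}.Finite → y ∈ S) ∧
    (∀ x ∈ S, ∀ y : ℕ → Bool, (∀ n, x n = true → y n = true) → y ∈ S)

/-- The key map: flip coordinate `n` (where `x n ≠ y n`) iff `z` agrees with `x` below `n`. -/
def fmap (x y z : ℕ → Bool) : ℕ → Bool :=
  fun n => xor (z n) (decide (x n ≠ y n) && decide (∀ k, k < n → z k = x k))

lemma fmap_agree (x y z : ℕ → Bool) (n : ℕ) :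
    (∀ k, k < n → fmap x y z k = y k) ↔ (∀ k, k < n → z k = x k) := by
  induction n with
  | zero => simp
  | succ n ih =>
    simp only [Nat.lt_succ_iff_lt_or_eq]
    constructor
    · intro h
      have h1 : ∀ k, k < n → z k = x k := ih.mp (fun k hk => h k (Or.inl hk))
      intro k hk
      rcases hk with hk | rfl
      · exact h1 k hk
      · have hn := h k (Or.inr rfl)
        simp only [fmap, decide_eq_true_eq] at hn
        rw [decide_eq_true h1, Bool.and_true] at hn
        revert hn
        cases hz : z k <;> cases hxk : x k <;> cases hyk : y k <;> simp
    · intro h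
      have h1 : ∀ k, k < n → fmap x y z k = y k := ih.mpr (fun k hk => h k (Or.inl hk))
      intro k hk
      rcases hk with hk | rfl
      · exact h1 k hk
      · have hagr : ∀ j, j < k → z j = x j := fun j hj => h j (Or.inl hj)
        have hn : z k = x k := h k (Or.inr rfl)
        simp only [fmap, decide_eq_true hagr, Bool.and_true]
        rw [hn]
        cases hxk : x k <;> cases hyk : y k <;> simp

lemma fmap_fmap (x y z : ℕ → Bool) : fmap y x (fmap x y z) = z := by
  funext n
  show xor (fmap x y z n) (decide (y n ≠ x n) && decide (∀ k, k < n → fmap x y z k = y k)) = z n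
  rw [show (decide (y n ≠ x n)) = decide (x n ≠ y n) from decide_eq_decide.mpr ne_comm,
    show (decide (∀ k, k < n → fmap x y z k = y k)) = decide (∀ k, k < n → z k = x k) from
      decide_eq_decide.mpr (fmap_agree x y z n)]
  show xor (xor (z n) _) _ = z n
  rw [Bool.xor_assoc, Bool.xor_self, Bool.xor_false]

lemma fmap_self (x y : ℕ → Bool) : fmap x y x = y := by
  funext n
  simp only [fmap, decide_eq_true (fun k (_ : k < n) => rfl), Bool.and_true]
  cases hx : x n <;> cases hy : y n <;> simp

lemma fmap_continuous (x y : ℕ → Bool) : Continuous (fmap x y) := by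
  apply continuous_pi
  intro n
  have key : (fun z => fmap x y z n) =
      (fun p : Fin (n + 1) → Bool =>
        xor (p ⟨n, n.lt_succ_self⟩)
          (decide (x n ≠ y n) && decide (∀ k : Fin n, p k.castSucc = x k))) ∘
      (fun z (k : Fin (n + 1)) => z k) := by
    funext z
    simp only [fmap, Function.comp_apply, Fin.coe_castSucc]
    congr 2
    apply decide_eq_decide.mpr
    exact ⟨fun h k => h k k.isLt, fun h k hk => h ⟨k, hk⟩⟩
  rw [key]
  exact (continuous_of_discreteTopology).comp (continuous_pi fun k => continuous_apply (k : ℕ))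

lemma fmap_mapsTo {X : Set (ℕ → Bool)}
    (hX : ∀ x ∈ X, ∀ y : ℕ → Bool, {n | x n ≠ y n}.Finite → y ∈ X)
    {x y : ℕ → Bool} (hx : x ∈ X) (hy : y ∈ X) : Set.MapsTo (fmap x y) X X := by
  intro z hz
  by_cases hzx : z = x
  · subst hzx; rw [fmap_self]; exact hy
  · have hex : ∃ m, z m ≠ x m := by
      by_contra hc
      push_neg at hc
      exact hzx (funext hc)
    obtain ⟨m, hm⟩ := hex
    apply hX z hz
    apply Set.Finite.subset (Set.finite_Iic m)
    intro n hn
    simp only [Set.mem_setOf_eq] at hn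
    by_contra hnm
    simp only [Set.mem_Iic, not_le] at hnm
    apply hn
    simp only [fmap]
    rw [show (decide (∀ k, k < n → z k = x k)) = false from
      decide_eq_false (fun h => hm (h m hnm)), Bool.and_false, Bool.xor_false]

/-- The flip map as a homeomorphism of `2^ω`. -/
def fmapHomeo (x y : ℕ → Bool) : (ℕ → Bool) ≃ₜ (ℕ → Bool) where
  toFun := fmap x y
  invFun := fmap y x
  left_inv := fmap_fmap x y
  right_inv := fmap_fmap y x
  continuous_toFun := fmap_continuous x y
  continuous_invFun := fmap_continuous y x

/-- Every subspace of `2^ω` that is closed under finite modifications is homogeneous;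
in particular, every semifilter on `ω`, viewed as a subspace of `2^ω`, is
homogeneous. -/
theorem statement9 :
    (∀ X : Set (ℕ → Bool),
        (∀ x ∈ X, ∀ y : ℕ → Bool, {n | x n ≠ y n}.Finite → y ∈ X) →
        ∀ x, ∀ hx : x ∈ X, ∀ y, ∀ hy : y ∈ X,
          ∃ h : ↥X ≃ₜ ↥X, h ⟨x, hx⟩ = ⟨y, hy⟩) ∧
    (∀ S : Set (ℕ → Bool), IsSemifilterB S →
        ∀ x, ∀ hx : x ∈ S, ∀ y, ∀ hy : y ∈ S,
          ∃ h : ↥S ≃ₜ ↥S, h ⟨x, hx⟩ = ⟨y, hy⟩) := by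
  have main : ∀ X : Set (ℕ → Bool),
      (∀ x ∈ X, ∀ y : ℕ → Bool, {n | x n ≠ y n}.Finite → y ∈ X) →
      ∀ x, ∀ hx : x ∈ X, ∀ y, ∀ hy : y ∈ X,
        ∃ h : ↥X ≃ₜ ↥X, h ⟨x, hx⟩ = ⟨y, hy⟩ := by
    intro X hX x hx y hy
    have himg : fmap x y '' X = X := by
      apply subset_antisymm
      · exact (fmap_mapsTo hX hx hy).image_subset
      · intro z hz
        exact ⟨fmap y x z, fmap_mapsTo hX hy hx hz, fmap_fmap y x z⟩
    refine ⟨((fmapHomeo x y).image X).trans (Homeomorph.setCongr himg), ?_⟩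
    apply Subtype.ext
    show fmap x y x = y
    exact fmap_self x y
  exact ⟨main, fun S hS => main S hS.2.2.1⟩
end

section
/- Let X be a zero-dimensional, locally compact, separable metrizable space. Then X is homogeneous if and only if X is discrete, or X is homeomorphic to 2^ω, or X is homeomorphic to ω × 2^ω. -/
/-!
A homogeneous space either consists of isolated points or has none. In the second case a
compact `X` is the Cantor space by Brouwer's theorem, which comes from a binary Cantor scheme of
nonempty clopen sets: at depth `n` each set is cut in two by a clopen set, taken to be the `n`-th
member `B n` of a countable point-separating family of clopens whenever `B n` cuts it. Then two
points on one branch would be separated at some depth, so every branch shrinks to a point and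
the induced map `2^ω → X` is a continuous bijection from a compact space. A noncompact `X` is
the disjoint union of infinitely many compact clopen pieces, each a Cantor space, hence
`X ≃ ω × 2^ω`. Conversely, swapping coordinates shows that these three kinds of spaces are
homogeneous.
-/

open Function Set Topology TopologicalSpace PiNat

section Perfect

variable {X : Type*} [TopologicalSpace X]

theorem perfectSpace_iff_forall_not_isOpen_singleton :
    PerfectSpace X ↔ ∀ x : X, ¬IsOpen ({x} : Set X) := by
  simp only [perfectSpace_iff_forall_not_isolated, isOpen_singleton_iff_punctured_nhds,
    Filter.neBot_iff]

theorem IsOpen.perfectSpace [PerfectSpace X] {U : Set X} (hU : IsOpen U) : PerfectSpace U := by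
  refine perfectSpace_iff_forall_not_isOpen_singleton.2 fun x hx => ?_
  have := hU.isOpenMap_subtype_val _ hx
  rw [image_singleton] at this
  exact (perfectSpace_iff_forall_not_isOpen_singleton (X := X)).1 ‹_› x this

theorem IsOpen.exists_isClopen_split [PerfectSpace X] [TotallySeparatedSpace X] {U : Set X}
    (hU : IsOpen U) (hne : U.Nonempty) :
    ∃ S, IsClopen S ∧ (U ∩ S).Nonempty ∧ (U \ S).Nonempty := by
  obtain ⟨x, hx⟩ := hne
  obtain ⟨y, ⟨-, hy⟩, hyx⟩ := accPt_iff_nhds.1 (hU.preperfect x hx) U (hU.mem_nhds hx)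
  obtain ⟨S, hS, hxS, hyS⟩ := exists_isClopen_of_totally_separated hyx.symm
  exact ⟨S, hS, ⟨x, hx, hxS⟩, ⟨y, hy, hyS⟩⟩

theorem exists_splitter [PerfectSpace X] [TotallySeparatedSpace X] {B : ℕ → Set X}
    (hB : ∀ n, IsClopen (B n)) :
    ∃ T : Set X → ℕ → Set X, (∀ C n, IsClopen (T C n)) ∧
      (∀ C n, IsOpen C → C.Nonempty → (C ∩ T C n).Nonempty ∧ (C \ T C n).Nonempty) ∧
      ∀ C n, (C ∩ B n).Nonempty → (C \ B n).Nonempty → T C n = B n := by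
  classical
  choose S hS using fun C : {C : Set X // IsOpen C ∧ C.Nonempty} =>
    C.2.1.exists_isClopen_split C.2.2
  refine ⟨fun C n => if (C ∩ B n).Nonempty ∧ (C \ B n).Nonempty then B n
    else if h : IsOpen C ∧ C.Nonempty then S ⟨C, h⟩ else ∅, ?_, ?_, ?_⟩
  · intro C n
    dsimp only
    split_ifs
    exacts [hB n, (hS _).1, isClopen_empty]
  · intro C n hC hne
    dsimp only
    split_ifs with h1 h2
    exacts [h1, (hS ⟨C, h2⟩).2, absurd ⟨hC, hne⟩ h2]
  · intro C n h1 h2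
    exact if_pos ⟨h1, h2⟩

theorem exists_seq_isClopen_separating (X : Type*) [TopologicalSpace X] [CompactSpace X]
    [TotallySeparatedSpace X] [SecondCountableTopology X] :
    ∃ B : ℕ → Set X, (∀ n, IsClopen (B n)) ∧ ∀ p q : X, p ≠ q → ∃ n, p ∈ B n ∧ q ∉ B n := by
  have := Clopens.countable_iff_secondCountable.2 ‹SecondCountableTopology X›
  obtain ⟨e, he⟩ := exists_surjective_nat (Clopens X)
  refine ⟨fun n => e n, fun n => (e n).isClopen, fun p q hpq => ?_⟩
  obtain ⟨U, hU, hpU, hqU⟩ := exists_isClopen_of_totally_separated hpq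
  obtain ⟨n, hn⟩ := he ⟨U, hU⟩
  exact ⟨n, by simpa [hn] using hpU, by simpa [hn] using hqU⟩

end Perfect

namespace CantorScheme

variable {β α : Type*} {A : List β → Set α}

theorem exists_forall_mem_res (hcover : ∀ l, A l ⊆ ⋃ b, A (b :: l)) {p : α} (hp : p ∈ A []) :
    ∃ x : ℕ → β, ∀ n, p ∈ A (res x n) := by
  choose next hnext using fun l : {l // p ∈ A l} => mem_iUnion.1 (hcover l.1 l.2)
  let path : ℕ → {l // p ∈ A l} := fun n =>
    Nat.rec ⟨[], hp⟩ (fun _ l => ⟨next l :: l.1, hnext l⟩) n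
  refine ⟨fun n => next (path n), fun n => ?_⟩
  have hres : res (fun n => next (path n)) n = (path n).1 := by
    induction n with
    | zero => rfl
    | succ n ih => rw [res_succ, ih]
  exact hres ▸ (path n).2

theorem nonempty_homeomorph [TopologicalSpace β] [DiscreteTopology β] [Finite β]
    [TopologicalSpace α] [CompactSpace α] [T2Space α]
    (hroot : A [] = univ) (hanti : CantorScheme.Antitone A) (hdisj : CantorScheme.Disjoint A)
    (hcover : ∀ l, A l ⊆ ⋃ b, A (b :: l)) (hclosed : ∀ l, IsClosed (A l))
    (hne : ∀ l, (A l).Nonempty) (hsub : ∀ x : ℕ → β, (⋂ n, A (res x n)).Subsingleton) :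
    Nonempty ((ℕ → β) ≃ₜ α) := by
  have hbranch : ∀ x : ℕ → β, Antitone fun n => A (res x n) :=
    fun x => antitone_nat_of_succ_le fun n => hanti _ _
  have hdom : ∀ x, x ∈ (inducedMap A).1 := fun x =>
    IsCompact.nonempty_iInter_of_sequence_nonempty_isCompact_isClosed _
      (fun n => hanti _ _) (fun n => hne _) (hclosed _).isCompact (fun n => hclosed _)
  let f : (ℕ → β) → α := fun x => (inducedMap A).2 ⟨x, hdom x⟩
  have hf_mem : ∀ x n, f x ∈ A (res x n) := fun x => map_mem ⟨x, hdom x⟩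
  have hf_eq : ∀ x p, (∀ n, p ∈ A (res x n)) → f x = p := fun x p hp =>
    hsub x (mem_iInter.2 (hf_mem x)) (mem_iInter.2 hp)
  have hinj : Injective f := fun x y h => congrArg Subtype.val (hdisj.map_injective h)
  have hsurj : Surjective f := fun p => by
    obtain ⟨x, hx⟩ := exists_forall_mem_res hcover (hroot ▸ mem_univ p)
    exact ⟨x, hf_eq x p hx⟩
  have hcont : Continuous f := continuous_iff_continuousAt.2 fun x U hU => by
    obtain ⟨n, hn⟩ := exists_subset_nhds_of_isCompact (hbranch x).directed_ge
      (fun n => (hclosed _).isCompact) fun p hp => by rwa [← hf_eq x p (mem_iInter.1 hp)]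
    refine Filter.mem_map.2 <|
      Filter.mem_of_superset ((isOpen_cylinder _ x n).mem_nhds (self_mem_cylinder x n)) ?_
    intro y hy
    rw [cylinder_eq_res] at hy
    exact hn (hy ▸ hf_mem y n)
  exact ⟨hcont.homeoOfEquivCompactToT2 (f := Equiv.ofBijective f ⟨hinj, hsurj⟩)⟩

end CantorScheme

section SplitScheme

variable {X : Type*}

def splitScheme (T : Set X → ℕ → Set X) : List Bool → Set X
  | [] => univ
  | true :: l => splitScheme T l ∩ T (splitScheme T l) l.length
  | false :: l => splitScheme T l \ T (splitScheme T l) l.length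

variable {T : Set X → ℕ → Set X}

theorem splitScheme_antitone : CantorScheme.Antitone (splitScheme T) := by
  rintro l (_ | _)
  · exact sdiff_subset
  · exact inter_subset_left

theorem splitScheme_disjoint : CantorScheme.Disjoint (splitScheme T) := by
  rintro l (_ | _) (_ | _) h
  · exact absurd rfl h
  · exact disjoint_sdiff_inter
  · exact disjoint_sdiff_inter.symm
  · exact absurd rfl h

theorem splitScheme_subset_iUnion (l : List Bool) :
    splitScheme T l ⊆ ⋃ b, splitScheme T (b :: l) := fun p hp => by
  by_cases h : p ∈ T (splitScheme T l) l.length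
  · exact mem_iUnion.2 ⟨true, hp, h⟩
  · exact mem_iUnion.2 ⟨false, hp, h⟩

theorem isClopen_splitScheme [TopologicalSpace X] (hT : ∀ C n, IsClopen (T C n)) :
    ∀ l, IsClopen (splitScheme T l)
  | [] => isClopen_univ
  | true :: l => (isClopen_splitScheme hT l).inter (hT _ _)
  | false :: l => (isClopen_splitScheme hT l).diff (hT _ _)

theorem splitScheme_nonempty [TopologicalSpace X] [Nonempty X] (hT : ∀ C n, IsClopen (T C n))
    (hsplit : ∀ C n, IsOpen C → C.Nonempty → (C ∩ T C n).Nonempty ∧ (C \ T C n).Nonempty) :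
    ∀ l, (splitScheme T l).Nonempty
  | [] => univ_nonempty
  | true :: l =>
    (hsplit _ _ (isClopen_splitScheme hT l).isOpen (splitScheme_nonempty hT hsplit l)).1
  | false :: l =>
    (hsplit _ _ (isClopen_splitScheme hT l).isOpen (splitScheme_nonempty hT hsplit l)).2

theorem subsingleton_iInter_splitScheme {B : ℕ → Set X}
    (hB : ∀ p q : X, p ≠ q → ∃ n, p ∈ B n ∧ q ∉ B n)
    (hTB : ∀ C n, (C ∩ B n).Nonempty → (C \ B n).Nonempty → T C n = B n) (x : ℕ → Bool) :
    (⋂ n, splitScheme T (res x n)).Subsingleton := by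
  intro p hp q hq
  by_contra hpq
  obtain ⟨n, hpB, hqB⟩ := hB p q hpq
  rw [mem_iInter] at hp hq
  have hTn : T (splitScheme T (res x n)) (res x n).length = B n := by
    rw [res_length]; exact hTB _ n ⟨p, hp n, hpB⟩ ⟨q, hq n, hqB⟩
  have hp' := hp (n + 1)
  have hq' := hq (n + 1)
  rw [res_succ] at hp' hq'
  cases hx : x n <;> rw [hx] at hp' hq'
  · exact hp'.2 (hTn ▸ hpB)
  · exact hqB (hTn ▸ hq'.2)

end SplitScheme

theorem nonempty_homeomorph_nat_bool_of_perfectSpace (X : Type*) [TopologicalSpace X]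
    [CompactSpace X] [TotallySeparatedSpace X] [SecondCountableTopology X] [PerfectSpace X]
    [Nonempty X] : Nonempty (X ≃ₜ (ℕ → Bool)) := by
  obtain ⟨B, hB, hsep⟩ := exists_seq_isClopen_separating X
  obtain ⟨T, hT, hsplit, hTB⟩ := exists_splitter hB
  obtain ⟨e⟩ := CantorScheme.nonempty_homeomorph (A := splitScheme T) rfl splitScheme_antitone
    splitScheme_disjoint splitScheme_subset_iUnion
    (fun l => (isClopen_splitScheme hT l).isClosed) (splitScheme_nonempty hT hsplit)
    (subsingleton_iInter_splitScheme hsep hTB)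
  exact ⟨e.symm⟩

section Partition

variable {X : Type*} [TopologicalSpace X]

theorem exists_isCompact_isClopen_partition [LocallyCompactSpace X] [SecondCountableTopology X]
    [Nonempty X] (hbasis : IsTopologicalBasis {s : Set X | IsClopen s}) :
    ∃ V : ℕ → Set X, (∀ n, IsCompact (V n) ∧ IsClopen (V n)) ∧ Pairwise (Disjoint on V) ∧
      ⋃ n, V n = univ := by
  have hnhds : ∀ x : X, ∃ c, IsClopen c ∧ IsCompact c ∧ x ∈ c := fun x => by
    obtain ⟨K, hK, hKx⟩ := exists_compact_mem_nhds x
    obtain ⟨c, hc, hxc, hcK⟩ := hbasis.exists_subset_of_mem_open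
      (mem_interior_iff_mem_nhds.2 hKx) isOpen_interior
    exact ⟨c, hc, hK.of_isClosed_subset hc.isClosed (hcK.trans interior_subset), hxc⟩
  choose W hW using hnhds
  obtain ⟨s, hs, hsW⟩ :=
    TopologicalSpace.countable_cover_nhds fun x => (hW x).1.isOpen.mem_nhds (hW x).2.2
  obtain ⟨x, hx, -⟩ := mem_iUnion₂.1 (hsW ▸ mem_univ (Classical.arbitrary X))
  obtain ⟨f, rfl⟩ := hs.exists_eq_range ⟨x, hx⟩
  refine ⟨disjointed (W ∘ f), fun n => ?_, disjoint_disjointed _, ?_⟩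
  · have hclopen : IsClopen (disjointed (W ∘ f) n) :=
      disjointedRec (fun _ _ ht => ht.diff (hW _).1) (hW _).1
    exact ⟨(hW _).2.1.of_isClosed_subset hclopen.isClosed (disjointed_subset _ n), hclopen⟩
  · rw [iUnion_disjointed, ← hsW, biUnion_range]
    rfl

theorem nonempty_prod_homeomorph_of_isOpen_partition {ι Y : Type*} [TopologicalSpace ι]
    [DiscreteTopology ι] [TopologicalSpace Y] {V : ι → Set X} (hV : ∀ i, IsOpen (V i))
    (hdisj : Pairwise (Disjoint on V)) (hcover : ⋃ i, V i = univ) (e : ∀ i, V i ≃ₜ Y) :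
    Nonempty (ι × Y ≃ₜ X) := by
  let ψ : ι × Y → X := fun p => (e p.1).symm p.2
  have hcont : Continuous ψ := continuous_prod_of_discrete_left.2 fun i =>
    continuous_subtype_val.comp (e i).symm.continuous
  have hopen : IsOpenMap ψ := isOpenMap_prod_of_discrete_left.2 fun i =>
    (hV i).isOpenMap_subtype_val.comp (e i).symm.isOpenMap
  have hinj : Injective ψ := by
    rintro ⟨i, y⟩ ⟨j, z⟩ h
    obtain rfl : i = j := by
      by_contra hij
      exact (hdisj hij).ne_of_mem ((e i).symm y).2 ((e j).symm z).2 h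
    simpa using (e i).symm.injective (Subtype.ext h)
  have hsurj : Surjective ψ := fun x => by
    obtain ⟨i, hx⟩ := mem_iUnion.1 (hcover ▸ mem_univ x)
    exact ⟨(i, e i ⟨x, hx⟩), by simp [ψ]⟩
  exact ⟨(Equiv.ofBijective ψ ⟨hinj, hsurj⟩).toHomeomorphOfContinuousOpen hcont hopen⟩

end Partition

theorem nonempty_homeomorph_nat_prod_of_not_compactSpace (X : Type*) [TopologicalSpace X]
    [LocallyCompactSpace X] [TotallySeparatedSpace X] [SecondCountableTopology X]
    [PerfectSpace X] [Nonempty X] (hX : ¬CompactSpace X) :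
    Nonempty (X ≃ₜ ℕ × (ℕ → Bool)) := by
  obtain ⟨V, hV, hdisj, hcover⟩ :=
    exists_isCompact_isClopen_partition (X := X) loc_compact_Haus_tot_disc_of_zero_dim
  let I := {n | (V n).Nonempty}
  have hcoverI : ⋃ n ∈ I, V n = univ := hcover ▸ iUnion_congr fun n => iUnion_nonempty_self (V n)
  have : Infinite I := Set.infinite_coe_iff.2 fun hfin => hX <| isCompact_univ_iff.1 <|
    hcoverI ▸ hfin.isCompact_biUnion fun n _ => (hV n).1
  have hpiece : ∀ n : I, Nonempty (V n ≃ₜ (ℕ → Bool)) := fun n => by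
    have := isCompact_iff_compactSpace.1 (hV n).1
    have := (hV n).2.isOpen.perfectSpace
    have := n.2.to_subtype
    exact nonempty_homeomorph_nat_bool_of_perfectSpace _
  obtain ⟨h⟩ := nonempty_prod_homeomorph_of_isOpen_partition (fun n : I => (hV n).2.isOpen)
    (hdisj.comp_of_injective Subtype.val_injective) (by rwa [iUnion_subtype])
    fun n => (hpiece n).some
  obtain ⟨_⟩ := nonempty_denumerable I
  exact ⟨h.symm.trans ((Denumerable.eqv I).toHomeomorphOfDiscrete.prodCongr (.refl _))⟩

section Homogeneous

def IsHomogeneousSpace (X : Type*) [TopologicalSpace X] : Prop :=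
  ∀ x y : X, ∃ h : X ≃ₜ X, h x = y

variable {X Y : Type*} [TopologicalSpace X] [TopologicalSpace Y]

theorem isHomogeneousSpace_of_discreteTopology [DiscreteTopology X] : IsHomogeneousSpace X := by
  classical
  exact fun x y => ⟨(Equiv.swap x y).toHomeomorphOfDiscrete, Equiv.swap_apply_left x y⟩

theorem IsHomogeneousSpace.of_homeomorph (hY : IsHomogeneousSpace Y) (e : X ≃ₜ Y) :
    IsHomogeneousSpace X := fun x y => by
  obtain ⟨h, hxy⟩ := hY (e x) (e y)
  exact ⟨(e.trans h).trans e.symm, by simp [hxy]⟩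

theorem IsHomogeneousSpace.prod (hX : IsHomogeneousSpace X) (hY : IsHomogeneousSpace Y) :
    IsHomogeneousSpace (X × Y) := fun p q => by
  obtain ⟨h₁, h₁p⟩ := hX p.1 q.1
  obtain ⟨h₂, h₂p⟩ := hY p.2 q.2
  exact ⟨h₁.prodCongr h₂, Prod.ext h₁p h₂p⟩

theorem IsHomogeneousSpace.pi {ι : Type*} {Z : ι → Type*} [∀ i, TopologicalSpace (Z i)]
    (hZ : ∀ i, IsHomogeneousSpace (Z i)) : IsHomogeneousSpace (∀ i, Z i) := fun x y => by
  choose h hxy using fun i => hZ i (x i) (y i)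
  exact ⟨Homeomorph.piCongrRight h, funext hxy⟩

theorem isHomogeneousSpace_nat_bool : IsHomogeneousSpace (ℕ → Bool) :=
  .pi fun _ => isHomogeneousSpace_of_discreteTopology

theorem IsHomogeneousSpace.discreteTopology_or_perfectSpace (hX : IsHomogeneousSpace X) :
    DiscreteTopology X ∨ PerfectSpace X := by
  by_cases hiso : ∃ x : X, IsOpen ({x} : Set X)
  · obtain ⟨x, hx⟩ := hiso
    refine .inl (discreteTopology_iff_isOpen_singleton.2 fun y => ?_)
    obtain ⟨h, rfl⟩ := hX x y
    simpa using h.isOpenMap _ hx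
  · exact .inr (perfectSpace_iff_forall_not_isOpen_singleton.2 (not_exists.1 hiso))

end Homogeneous

/-- A zero-dimensional, locally compact, separable metrizable space is homogeneous
iff it is discrete, or homeomorphic to the Cantor set `2^ω`, or homeomorphic to
`ω × 2^ω`. -/
theorem statement10 {X : Type*} [TopologicalSpace X]
    [TopologicalSpace.MetrizableSpace X] [TopologicalSpace.SeparableSpace X]
    [LocallyCompactSpace X] [Nonempty X]
    (hbasis : TopologicalSpace.IsTopologicalBasis {s : Set X | IsClopen s}) :
    (∀ x y : X, ∃ h : X ≃ₜ X, h x = y) ↔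
      (DiscreteTopology X ∨ Nonempty (X ≃ₜ (ℕ → Bool)) ∨
        Nonempty (X ≃ₜ (ℕ × (ℕ → Bool)))) := by
  have : TotallySeparatedSpace X := totallySeparatedSpace_of_t0_of_basis_clopen hbasis
  have : SecondCountableTopology X := by
    let := pseudoMetrizableSpaceUniformity X
    have := pseudoMetrizableSpaceUniformity_countably_generated X
    exact UniformSpace.secondCountable_of_separable X
  constructor
  · intro hX
    obtain hdisc | hperf := IsHomogeneousSpace.discreteTopology_or_perfectSpace hX
    · exact .inl hdisc
    refine .inr ?_
    by_cases hc : CompactSpace X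
    · exact .inl (nonempty_homeomorph_nat_bool_of_perfectSpace X)
    · exact .inr (nonempty_homeomorph_nat_prod_of_not_compactSpace X hc)
  · rintro (_ | ⟨⟨e⟩⟩ | ⟨⟨e⟩⟩)
    · exact isHomogeneousSpace_of_discreteTopology
    · exact isHomogeneousSpace_nat_bool.of_homeomorph e
    · exact (isHomogeneousSpace_of_discreteTopology.prod isHomogeneousSpace_nat_bool).of_homeomorph
        e
end

section
/- If X is a homogeneous topological space, then X is either a meager space or a Baire space. -/
/-- Every homogeneous (separable metrizable) space is either a meager space or a
Baire space. -/
theorem statement11 {X : Type*} [TopologicalSpace X]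
    [TopologicalSpace.MetrizableSpace X] [TopologicalSpace.SeparableSpace X]
    (hhom : ∀ x y : X, ∃ h : X ≃ₜ X, h x = y) :
    IsMeagre (Set.univ : Set X) ∨ BaireSpace X := by
  letI := TopologicalSpace.metrizableSpaceMetric X
  haveI : SecondCountableTopology X := UniformSpace.secondCountable_of_separable X
  by_cases H : ∃ U : Set X, IsOpen U ∧ U.Nonempty ∧ IsMeagre U
  · left
    obtain ⟨U, hUo, ⟨x₀, hx₀⟩, hUm⟩ := H
    choose h hh using fun y => hhom x₀ y
    set s : X → Set X := fun y => (h y).symm ⁻¹' U with hs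
    have hso : ∀ y, IsOpen (s y) := fun y =>
      hUo.preimage (h y).symm.continuous
    have hsm : ∀ y, IsMeagre (s y) :=
      fun y => hUm.preimage_of_isOpenMap (h y).symm.continuous (h y).symm.isOpenMap
    have hcov : (⋃ y, s y) = Set.univ := by
      apply Set.eq_univ_of_forall
      intro y
      exact Set.mem_iUnion.2 ⟨y, show (h y).symm y ∈ U from ((h y).symm_apply_eq.2 (hh y).symm) ▸ hx₀⟩
    obtain ⟨T, hTc, hTU⟩ := TopologicalSpace.isOpen_iUnion_countable s hso
    have : IsMeagre (⋃ y ∈ T, s y) := by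
      rw [IsMeagre, Set.compl_iUnion₂]
      exact (countable_bInter_mem hTc).2 fun y _ => hsm y
    rw [hTU, hcov] at this
    exact this
  · right
    push_neg at H
    refine ⟨fun f ho hd => ?_⟩
    have hres : (⋂ n, f n) ∈ residual X :=
      countable_iInter_mem.2 fun n => residual_of_dense_open (ho n) (hd n)
    have hm : IsMeagre (⋂ n, f n)ᶜ := by rwa [IsMeagre, compl_compl]
    rw [dense_iff_inter_open]
    intro V hVo hVne
    by_contra hemp
    rw [Set.not_nonempty_iff_eq_empty] at hemp
    exact H V hVo hVne (hm.mono (Set.subset_compl_iff_disjoint_right.2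
      (Set.disjoint_iff_inter_eq_empty.2 hemp)))
end

section
/- Let Z be a zero-dimensional separable metrizable space, ξ < ω₁, and let D ⊆ P(Z) be selfdual (D = {Z \ A : A ∈ D}). Then SU_ξ(D) ∩ dual(SU_ξ(D)) = PU_ξ(D). -/
/-- The additive Borel hierarchy `Σ⁰_ξ` on a topological space, indexed by ordinals. -/
noncomputable def Sigma0 (X : Type*) [TopologicalSpace X] (ξ : Ordinal.{0}) : Set (Set X) :=
  {s | (ξ = 1 ∧ IsOpen s) ∨
    (1 < ξ ∧ ∃ (f : ℕ → Set X) (o : ℕ → Set.Iio ξ),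
      (∀ n, 1 ≤ (o n).1) ∧ (∀ n, (f n)ᶜ ∈ Sigma0 X (o n).1) ∧ s = ⋃ n, f n)}
termination_by ξ
decreasing_by exact (o n).2

/-- The ambiguous class `Δ⁰_ξ`. -/
noncomputable def Delta0 (X : Type*) [TopologicalSpace X] (ξ : Ordinal.{0}) : Set (Set X) :=
  {s | s ∈ Sigma0 X ξ ∧ sᶜ ∈ Sigma0 X ξ}

/-- `PU_ξ(Γ)`: partitioned unions of sets in `Γ` along a partition of `X` into
`Δ⁰_{1+ξ}` sets. -/
noncomputable def PU (X : Type*) [TopologicalSpace X] (ξ : Ordinal.{0})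
    (Γ : Set (Set X)) : Set (Set X) :=
  {s | ∃ A V : ℕ → Set X, (∀ n, A n ∈ Γ) ∧ (∀ n, V n ∈ Delta0 X (1 + ξ)) ∧
    Pairwise (Function.onFun Disjoint V) ∧ (⋃ n, V n) = Set.univ ∧
    s = ⋃ n, A n ∩ V n}

/-- `SU_ξ(Γ)`: separated unions `⋃ₙ (Aₙ ∩ Uₙ)` with `Aₙ ∈ Γ` and `(Uₙ)` pairwise
disjoint `Σ⁰_{1+ξ}` sets. -/
noncomputable def SU (X : Type*) [TopologicalSpace X] (ξ : Ordinal.{0})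
    (Γ : Set (Set X)) : Set (Set X) :=
  {s | ∃ A U : ℕ → Set X, (∀ n, A n ∈ Γ) ∧ (∀ n, U n ∈ Sigma0 X (1 + ξ)) ∧
    Pairwise (Function.onFun Disjoint U) ∧ s = ⋃ n, A n ∩ U n}

/-!
If `s` and `sᶜ` are both separated unions, the `Σ⁰_{1+ξ}` pieces of the two representations
cover `Z`, and on each piece `s` agrees with a member of `D` (on the pieces coming from `sᶜ`
this uses that `D` is selfdual). In a zero-dimensional second-countable space every
`Σ⁰_{1+ξ}` set is a countable union of `Δ⁰_{1+ξ}` sets, so disjointifying these refines the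
cover to a partition into `Δ⁰_{1+ξ}` sets, which exhibits `s` as a partitioned union.
Conversely, a partitioned union is a separated union, and its complement is the partitioned
union of the complements along the same partition.
-/

open Set TopologicalSpace Function

section BorelHierarchy

variable {X : Type*} [TopologicalSpace X] {ξ η : Ordinal.{0}} {s t : Set X}

lemma mem_sigma0_one_iff : s ∈ Sigma0 X 1 ↔ IsOpen s := by
  rw [Sigma0]; simp

lemma one_le_of_mem_sigma0 (hs : s ∈ Sigma0 X ξ) : 1 ≤ ξ := by
  rw [Sigma0] at hs
  rcases hs with ⟨rfl, -⟩ | ⟨h, -⟩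
  exacts [le_rfl, h.le]

lemma mem_sigma0_iff_of_one_lt (h : 1 < ξ) :
    s ∈ Sigma0 X ξ ↔
      ∃ f : ℕ → Set X, (∀ n, ∃ η, 1 ≤ η ∧ η < ξ ∧ (f n)ᶜ ∈ Sigma0 X η) ∧ s = ⋃ n, f n := by
  rw [Sigma0]
  simp only [h.ne', h, false_and, false_or, true_and]
  constructor
  · rintro ⟨f, o, ho1, hf, rfl⟩
    exact ⟨f, fun n => ⟨o n, ho1 n, (o n).2, hf n⟩, rfl⟩
  · rintro ⟨f, hf, rfl⟩
    choose o ho1 hlt hf using hf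
    exact ⟨f, fun n => ⟨o n, hlt n⟩, ho1, hf, rfl⟩

lemma iUnion_mem_sigma0_of_one_lt {ι : Type*} [Countable ι] [Nonempty ι] (h : 1 < ξ)
    {f : ι → Set X} (hf : ∀ i, ∃ η, 1 ≤ η ∧ η < ξ ∧ (f i)ᶜ ∈ Sigma0 X η) :
    (⋃ i, f i) ∈ Sigma0 X ξ := by
  obtain ⟨g, hg⟩ := exists_surjective_nat ι
  rw [mem_sigma0_iff_of_one_lt h, ← hg.iUnion_comp]
  exact ⟨f ∘ g, fun n => hf (g n), rfl⟩

lemma mem_sigma0_of_compl_mem (h1 : 1 ≤ η) (hlt : η < ξ) (hs : sᶜ ∈ Sigma0 X η) :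
    s ∈ Sigma0 X ξ := by
  have := iUnion_mem_sigma0_of_one_lt (h1.trans_lt hlt) (f := fun _ : Unit => s)
    fun _ => ⟨η, h1, hlt, hs⟩
  rwa [iUnion_const] at this

lemma empty_mem_sigma0 (h1 : 1 ≤ ξ) : (∅ : Set X) ∈ Sigma0 X ξ := by
  rcases h1.eq_or_lt with rfl | h
  · exact mem_sigma0_one_iff.2 isOpen_empty
  · exact mem_sigma0_of_compl_mem le_rfl h (by simpa using mem_sigma0_one_iff.2 isOpen_univ)

lemma iUnion_mem_sigma0 {ι : Type*} [Countable ι] (h1 : 1 ≤ ξ) {f : ι → Set X}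
    (hf : ∀ i, f i ∈ Sigma0 X ξ) : (⋃ i, f i) ∈ Sigma0 X ξ := by
  rcases h1.eq_or_lt with rfl | h
  · exact mem_sigma0_one_iff.2 (isOpen_iUnion fun i => mem_sigma0_one_iff.1 (hf i))
  cases isEmpty_or_nonempty ι
  · simpa using empty_mem_sigma0 h1
  choose g hg hfg using fun i => (mem_sigma0_iff_of_one_lt h).1 (hf i)
  have := iUnion_mem_sigma0_of_one_lt h (f := fun p : ι × ℕ => g p.1 p.2) fun p => hg p.1 p.2
  rwa [iUnion_prod', ← iUnion_congr hfg] at this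

lemma union_mem_sigma0 (h1 : 1 ≤ ξ) (hs : s ∈ Sigma0 X ξ) (ht : t ∈ Sigma0 X ξ) :
    s ∪ t ∈ Sigma0 X ξ := by
  rw [union_eq_iUnion]
  exact iUnion_mem_sigma0 h1 fun b => by cases b <;> assumption

section PerfectlyNormal

variable [PerfectlyNormalSpace X]

lemma IsOpen.mem_sigma0 (h1 : 1 ≤ ξ) (hs : IsOpen s) : s ∈ Sigma0 X ξ := by
  rcases h1.eq_or_lt with rfl | h
  · exact mem_sigma0_one_iff.2 hs
  obtain ⟨f, hfo, hf⟩ := hs.isClosed_compl.isGδ.eq_iInter_nat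
  rw [← compl_compl s, hf, compl_iInter]
  exact iUnion_mem_sigma0_of_one_lt h fun n =>
    ⟨1, le_rfl, h, by rw [compl_compl]; exact mem_sigma0_one_iff.2 (hfo n)⟩

lemma sigma0_mono (hle : η ≤ ξ) : Sigma0 X η ⊆ Sigma0 X ξ := by
  intro s hs
  rcases hle.eq_or_lt with rfl | hlt
  · exact hs
  rcases (one_le_of_mem_sigma0 hs).eq_or_lt with rfl | hη
  · exact (mem_sigma0_one_iff.1 hs).mem_sigma0 hlt.le
  obtain ⟨f, hf, rfl⟩ := (mem_sigma0_iff_of_one_lt hη).1 hs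
  exact iUnion_mem_sigma0_of_one_lt (hη.trans hlt) fun n =>
    (hf n).imp fun ζ hζ => ⟨hζ.1, hζ.2.1.trans hlt, hζ.2.2⟩

lemma inter_mem_sigma0 (h1 : 1 ≤ ξ) (hs : s ∈ Sigma0 X ξ) (ht : t ∈ Sigma0 X ξ) :
    s ∩ t ∈ Sigma0 X ξ := by
  rcases h1.eq_or_lt with rfl | h
  · exact mem_sigma0_one_iff.2 ((mem_sigma0_one_iff.1 hs).inter (mem_sigma0_one_iff.1 ht))
  obtain ⟨f, hf, rfl⟩ := (mem_sigma0_iff_of_one_lt h).1 hs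
  obtain ⟨g, hg, rfl⟩ := (mem_sigma0_iff_of_one_lt h).1 ht
  have := iUnion_mem_sigma0_of_one_lt h (f := fun p : ℕ × ℕ => f p.1 ∩ g p.2) fun p => by
    obtain ⟨η, hη1, hηξ, hfη⟩ := hf p.1
    obtain ⟨ζ, -, hζξ, hgζ⟩ := hg p.2
    refine ⟨max η ζ, hη1.trans (le_max_left _ _), max_lt hηξ hζξ, ?_⟩
    rw [compl_inter]
    exact union_mem_sigma0 (hη1.trans (le_max_left _ _))
      (sigma0_mono (le_max_left _ _) hfη) (sigma0_mono (le_max_right _ _) hgζ)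
  rwa [iUnion_prod', ← iUnion_inter_iUnion] at this

lemma IsClopen.mem_delta0 (h1 : 1 ≤ ξ) (hs : IsClopen s) : s ∈ Delta0 X ξ :=
  ⟨hs.isOpen.mem_sigma0 h1, hs.compl.isOpen.mem_sigma0 h1⟩

lemma mem_delta0_of_compl_mem (h1 : 1 ≤ η) (hlt : η < ξ) (hs : sᶜ ∈ Sigma0 X η) :
    s ∈ Delta0 X ξ :=
  ⟨mem_sigma0_of_compl_mem h1 hlt hs, sigma0_mono hlt.le hs⟩

lemma diff_mem_delta0 (h1 : 1 ≤ ξ) (hs : s ∈ Delta0 X ξ) (ht : t ∈ Delta0 X ξ) :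
    s \ t ∈ Delta0 X ξ :=
  ⟨inter_mem_sigma0 h1 hs.1 ht.2, by rw [compl_sdiff]; exact union_mem_sigma0 h1 ht.1 hs.2⟩

end PerfectlyNormal

section ZeroDimensional

variable [SecondCountableTopology X] (hbasis : IsTopologicalBasis {s : Set X | IsClopen s})
include hbasis

lemma IsOpen.exists_isClopen_iUnion_eq (hs : IsOpen s) :
    ∃ E : ℕ → Set X, (∀ n, IsClopen (E n)) ∧ s = ⋃ n, E n := by
  obtain ⟨S, hSB, rfl⟩ := hbasis.open_eq_sUnion hs
  obtain ⟨T, hTc, hTS, hTU⟩ := isOpen_sUnion_countable S fun u hu => (hSB hu).isOpen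
  obtain ⟨E, hE⟩ := (hTc.insert ∅).exists_eq_range (insert_nonempty _ _)
  refine ⟨E, fun n => ?_, ?_⟩
  · rcases (hE ▸ mem_range_self n : E n ∈ insert ∅ T) with h | h
    · exact h ▸ isClopen_empty
    · exact hSB (hTS h)
  · rw [← hTU, ← empty_union (⋃₀ T), ← sUnion_insert, hE, sUnion_range]

variable [PerfectlyNormalSpace X]

lemma exists_delta0_iUnion_eq (h1 : 1 ≤ ξ) (hs : s ∈ Sigma0 X ξ) :
    ∃ E : ℕ → Set X, (∀ n, E n ∈ Delta0 X ξ) ∧ s = ⋃ n, E n := by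
  rcases h1.eq_or_lt with rfl | h
  · obtain ⟨E, hE, rfl⟩ := (mem_sigma0_one_iff.1 hs).exists_isClopen_iUnion_eq hbasis
    exact ⟨E, fun n => (hE n).mem_delta0 le_rfl, rfl⟩
  · obtain ⟨f, hf, rfl⟩ := (mem_sigma0_iff_of_one_lt h).1 hs
    choose η hη1 hηξ hfη using hf
    exact ⟨f, fun n => mem_delta0_of_compl_mem (hη1 n) (hηξ n) (hfη n), rfl⟩

lemma exists_delta0_partition_subordinate {ι : Type*} [Countable ι] [Nonempty ι] (h1 : 1 ≤ ξ)
    {C : ι → Set X} (hC : ∀ i, C i ∈ Sigma0 X ξ) (hcov : ⋃ i, C i = univ) :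
    ∃ (V : ℕ → Set X) (f : ℕ → ι), (∀ n, V n ∈ Delta0 X ξ) ∧ Pairwise (Disjoint on V) ∧
      ⋃ n, V n = univ ∧ ∀ n, V n ⊆ C (f n) := by
  choose E hE hCE using fun i => exists_delta0_iUnion_eq hbasis h1 (hC i)
  obtain ⟨g, hg⟩ := exists_surjective_nat (ι × ℕ)
  set F : ℕ → Set X := fun n => E (g n).1 (g n).2
  refine ⟨disjointed F, fun n => (g n).1,
    fun n => disjointedRec (fun _ _ ht => diff_mem_delta0 h1 ht (hE _ _)) (hE _ _),
    disjoint_disjointed F, ?_, fun n => (disjointed_subset F n).trans ?_⟩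
  · calc ⋃ n, disjointed F n = ⋃ n, F n := iUnion_disjointed
      _ = ⋃ p : ι × ℕ, E p.1 p.2 := hg.iUnion_comp fun p => E p.1 p.2
      _ = ⋃ i, C i := by rw [iUnion_prod']; exact iUnion_congr fun i => (hCE i).symm
      _ = univ := hcov
  · rw [hCE]
    exact subset_iUnion (E (g n).1) _

end ZeroDimensional

end BorelHierarchy

section Piecewise

variable {X : Type*} {Γ : Set (Set X)} {s : Set X}

def PiecewiseMem (Γ : Set (Set X)) {ι : Type*} (C : ι → Set X) (s : Set X) : Prop :=
  ∀ i, ∃ a ∈ Γ, s ∩ C i = a ∩ C i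

lemma PiecewiseMem.compl {ι : Type*} {C : ι → Set X} (hΓ : ∀ a ∈ Γ, aᶜ ∈ Γ)
    (hs : PiecewiseMem Γ C s) : PiecewiseMem Γ C sᶜ := fun i => by
  obtain ⟨a, ha, hsa⟩ := hs i
  refine ⟨aᶜ, hΓ a ha, ?_⟩
  ext x
  have := congrArg (x ∈ ·) hsa
  simp only [mem_inter_iff, mem_compl_iff, eq_iff_iff] at this ⊢
  tauto

lemma PiecewiseMem.of_subset {ι κ : Type*} {C : ι → Set X} {V : κ → Set X} {f : κ → ι}
    (hs : PiecewiseMem Γ C s) (hV : ∀ k, V k ⊆ C (f k)) : PiecewiseMem Γ V s := fun k => by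
  obtain ⟨a, ha, hsa⟩ := hs (f k)
  refine ⟨a, ha, ?_⟩
  rw [← inter_eq_right.2 (hV k), ← inter_assoc, hsa, inter_assoc]

lemma iUnion_inter_inter_of_pairwise_disjoint {ι : Type*} {A U : ι → Set X}
    (hU : Pairwise (Disjoint on U)) (k : ι) : (⋃ i, A i ∩ U i) ∩ U k = A k ∩ U k := by
  ext x
  simp only [mem_inter_iff, mem_iUnion]
  refine ⟨fun ⟨⟨i, hxA, hxU⟩, hxk⟩ => ?_, fun ⟨hxA, hxk⟩ => ⟨⟨k, hxA, hxk⟩, hxk⟩⟩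
  obtain rfl : i = k := by_contra fun hik => disjoint_left.1 (hU hik) hxU hxk
  exact ⟨hxA, hxk⟩

end Piecewise

section SeparatedUnions

variable {X : Type*} [TopologicalSpace X] {ξ : Ordinal.{0}} {Γ : Set (Set X)} {s : Set X}

lemma piecewiseMem_of_mem_SU (hs : s ∈ SU X ξ Γ) :
    ∃ U : ℕ → Set X, (∀ n, U n ∈ Sigma0 X (1 + ξ)) ∧ s ⊆ ⋃ n, U n ∧ PiecewiseMem Γ U s := by
  obtain ⟨A, U, hA, hU, hUd, rfl⟩ := hs
  exact ⟨U, hU, iUnion_mono fun n => inter_subset_right,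
    fun k => ⟨A k, hA k, iUnion_inter_inter_of_pairwise_disjoint hUd k⟩⟩

lemma mem_PU_iff : s ∈ PU X ξ Γ ↔ ∃ V : ℕ → Set X, (∀ n, V n ∈ Delta0 X (1 + ξ)) ∧
    Pairwise (Disjoint on V) ∧ ⋃ n, V n = univ ∧ PiecewiseMem Γ V s := by
  constructor
  · rintro ⟨A, V, hA, hV, hVd, hVcov, rfl⟩
    exact ⟨V, hV, hVd, hVcov, fun k => ⟨A k, hA k, iUnion_inter_inter_of_pairwise_disjoint hVd k⟩⟩
  · rintro ⟨V, hV, hVd, hVcov, hs⟩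
    choose A hA hsA using hs
    refine ⟨A, V, hA, hV, hVd, hVcov, ?_⟩
    rw [← iUnion_congr hsA, ← inter_iUnion, hVcov, inter_univ]

lemma PU_subset_SU : PU X ξ Γ ⊆ SU X ξ Γ :=
  fun _ ⟨A, V, hA, hV, hVd, _, hs⟩ => ⟨A, V, hA, fun n => (hV n).1, hVd, hs⟩

lemma compl_mem_PU (hΓ : ∀ a ∈ Γ, aᶜ ∈ Γ) (hs : s ∈ PU X ξ Γ) : sᶜ ∈ PU X ξ Γ := by
  obtain ⟨V, hV, hVd, hVcov, hsV⟩ := mem_PU_iff.1 hs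
  exact mem_PU_iff.2 ⟨V, hV, hVd, hVcov, hsV.compl hΓ⟩

lemma mem_PU_of_mem_SU_of_compl_mem_SU [PerfectlyNormalSpace X] [SecondCountableTopology X]
    (hbasis : IsTopologicalBasis {s : Set X | IsClopen s}) (hΓ : ∀ a ∈ Γ, aᶜ ∈ Γ)
    (hs : s ∈ SU X ξ Γ) (hsc : sᶜ ∈ SU X ξ Γ) : s ∈ PU X ξ Γ := by
  obtain ⟨U, hU, hsU, hsPU⟩ := piecewiseMem_of_mem_SU hs
  obtain ⟨W, hW, hsW, hsPW⟩ := piecewiseMem_of_mem_SU hsc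
  have hC : ∀ i, Sum.elim U W i ∈ Sigma0 X (1 + ξ) := Sum.forall.2 ⟨hU, hW⟩
  have hcov : ⋃ i, Sum.elim U W i = univ := by
    rw [iUnion_sum, ← univ_subset_iff, ← union_compl_self s]
    exact union_subset_union hsU hsW
  have hsC : PiecewiseMem Γ (Sum.elim U W) s :=
    Sum.forall.2 ⟨hsPU, compl_compl s ▸ hsPW.compl hΓ⟩
  obtain ⟨V, f, hV, hVd, hVcov, hVC⟩ :=
    exists_delta0_partition_subordinate hbasis le_self_add hC hcov
  exact mem_PU_iff.2 ⟨V, hV, hVd, hVcov, hsC.of_subset hVC⟩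

end SeparatedUnions

theorem statement15_general {Z : Type*} [TopologicalSpace Z]
    [TopologicalSpace.MetrizableSpace Z] [TopologicalSpace.SeparableSpace Z]
    (hbasis : TopologicalSpace.IsTopologicalBasis {s : Set Z | IsClopen s})
    (ξ : Ordinal.{0})
    (D : Set (Set Z)) (hD : D = (fun s : Set Z => sᶜ) '' D) :
    SU Z ξ D ∩ ((fun s : Set Z => sᶜ) '' SU Z ξ D) = PU Z ξ D := by
  let := metrizableSpaceMetric Z
  have hDc : ∀ a ∈ D, aᶜ ∈ D := fun a ha => by
    rw [hD]
    exact mem_image_of_mem _ ha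
  ext s
  constructor
  · rintro ⟨hs, t, ht, rfl⟩
    exact mem_PU_of_mem_SU_of_compl_mem_SU hbasis hDc hs (by rwa [compl_compl])
  · intro hs
    exact ⟨PU_subset_SU hs, sᶜ, PU_subset_SU (compl_mem_PU hDc hs), compl_compl s⟩

/-- If `D` is selfdual, then `SU_ξ(D) ∩ dual(SU_ξ(D)) = PU_ξ(D)` in any
zero-dimensional separable metrizable space. -/
theorem statement15 {Z : Type*} [TopologicalSpace Z]
    [TopologicalSpace.MetrizableSpace Z] [TopologicalSpace.SeparableSpace Z]
    [Nonempty Z]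
    (hbasis : TopologicalSpace.IsTopologicalBasis {s : Set Z | IsClopen s})
    (ξ : Ordinal.{0}) (hξ : ξ.card ≤ Cardinal.aleph0)
    (D : Set (Set Z)) (hD : D = (fun s : Set Z => sᶜ) '' D) :
    SU Z ξ D ∩ ((fun s : Set Z => sᶜ) '' SU Z ξ D) = PU Z ξ D :=
  statement15_general hbasis ξ D hD
end

section
/- Let Z be a space, B ⊆ Z, Γ ⊆ P(Z) closed under SU₁, and Aₙ ∈ Γ for n ∈ ω. If each Aₙ is a closed subset of B (in the subspace topology of B) and ⋃ₙ Aₙ = B, then B ∈ Γ. -/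
/-- An `Fσ` (that is, `Σ⁰₂`) subset: a countable union of closed sets. -/
def IsFsigma {Z : Type*} [TopologicalSpace Z] (s : Set Z) : Prop :=
  ∃ f : ℕ → Set Z, (∀ n, IsClosed (f n)) ∧ s = ⋃ n, f n

/-- `SU₁(Γ)`: separated unions `⋃ₙ (Aₙ ∩ Uₙ)` with `Aₙ ∈ Γ` and `(Uₙ)` pairwise
disjoint `Σ⁰₂` (Fσ) sets. -/
def SU1 (Z : Type*) [TopologicalSpace Z] (Γ : Set (Set Z)) : Set (Set Z) :=
  {s | ∃ A U : ℕ → Set Z, (∀ n, A n ∈ Γ) ∧ (∀ n, IsFsigma (U n)) ∧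
    Pairwise (Function.onFun Disjoint U) ∧ s = ⋃ n, A n ∩ U n}

/-- In a metrizable space, the intersection of a closed set and an open set is Fσ. -/
lemma isFsigma_closed_inter_open {Z : Type*} [TopologicalSpace Z]
    [TopologicalSpace.MetrizableSpace Z] {s t : Set Z}
    (hs : IsClosed s) (ht : IsOpen t) : IsFsigma (s ∩ t) := by
  letI : MetricSpace Z := TopologicalSpace.metrizableSpaceMetric Z
  have h : IsGδ tᶜ := (isClosed_compl_iff.mpr ht).isGδ
  obtain ⟨f, hfo, hf⟩ := h.eq_iInter_nat
  refine ⟨fun n => s ∩ (f n)ᶜ, fun n => hs.inter (hfo n).isClosed_compl, ?_⟩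
  rw [← Set.inter_iUnion]
  congr 1
  rw [← compl_compl t, hf, Set.compl_iInter]

/-- If `Γ` is closed under `SU₁`, the sets `Aₙ ∈ Γ` are closed subsets of `B` in the
subspace topology of `B`, and `⋃ₙ Aₙ = B`, then `B ∈ Γ`. -/
theorem statement18 {Z : Type*} [TopologicalSpace Z]
    [TopologicalSpace.MetrizableSpace Z] [TopologicalSpace.SeparableSpace Z]
    (Γ : Set (Set Z)) (hΓ : SU1 Z Γ = Γ)
    (B : Set Z) (A : ℕ → Set Z) (hA : ∀ n, A n ∈ Γ)
    (hsub : ∀ n, A n ⊆ B)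
    (hclosed : ∀ n, IsClosed {x : ↥B | (x : Z) ∈ A n})
    (hcover : (⋃ n, A n) = B) :
    B ∈ Γ := by
  -- Key fact: since `A n` is closed in `B`, `B ∩ closure (A n) ⊆ A n`.
  have key : ∀ n, ∀ x ∈ B, x ∈ closure (A n) → x ∈ A n := by
    intro n x hxB hxc
    obtain ⟨C, hC, hCeq⟩ := isClosed_induced_iff.mp (hclosed n)
    have hAC : A n ⊆ C := by
      intro y hy
      have : (⟨y, hsub n hy⟩ : ↥B) ∈ {x : ↥B | (x : Z) ∈ A n} := hy
      rw [← hCeq] at this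
      exact this
    have hxC : x ∈ C := closure_minimal hAC hC hxc
    have : (⟨x, hxB⟩ : ↥B) ∈ (fun x : ↥B => (x : Z)) ⁻¹' C := hxC
    rw [hCeq] at this
    exact this
  set U : ℕ → Set Z := fun n => closure (A n) \ ⋃ k ∈ Finset.range n, closure (A k) with hU
  rw [← hΓ]
  refine ⟨A, U, hA, ?_, ?_, ?_⟩
  · intro n
    have : U n = closure (A n) ∩ (⋃ k ∈ Finset.range n, closure (A k))ᶜ := rfl
    rw [this]
    exact isFsigma_closed_inter_open isClosed_closure
      (isOpen_compl_iff.mpr (Set.Finite.isClosed_biUnion (Finset.finite_toSet _)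
        fun k _ => isClosed_closure))
  · intro m n hmn
    rcases lt_or_gt_of_ne hmn with h | h
    · refine Set.disjoint_left.mpr fun x hxm hxn => ?_
      exact hxn.2 (Set.mem_biUnion (Finset.mem_range.mpr h) hxm.1)
    · refine Set.disjoint_left.mpr fun x hxm hxn => ?_
      exact hxm.2 (Set.mem_biUnion (Finset.mem_range.mpr h) hxn.1)
  · apply Set.Subset.antisymm
    · intro x hxB
      have hx : x ∈ ⋃ n, A n := hcover ▸ hxB
      have hex : ∃ n, x ∈ closure (A n) := by
        obtain ⟨n, hn⟩ := Set.mem_iUnion.mp hx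
        exact ⟨n, subset_closure hn⟩
      classical
      set n := Nat.find hex with hndef
      have hn : x ∈ closure (A n) := Nat.find_spec hex
      have hmin : ∀ k, x ∈ closure (A k) → n ≤ k := fun k hk => Nat.find_min' hex hk
      refine Set.mem_iUnion.mpr ⟨n, key n x hxB hn, hn, ?_⟩
      intro hmem
      obtain ⟨k, hk1, hk2⟩ := Set.mem_iUnion₂.mp hmem
      exact absurd hk2 (by
        intro h
        exact Nat.lt_irrefl k (Nat.lt_of_lt_of_le (Finset.mem_range.mp hk1)
          (hmin k h)))
    · exact Set.iUnion_subset fun n => (Set.inter_subset_left).trans (hsub n)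
end

section
/- Let Z be a space, 1 ≤ η < ω₁, and D, Γ ⊆ P(Z). Then the dual of SD_η(D, Γ) equals SD_η(dual of D, dual of Γ); that is, {Z \ A : A ∈ SD_η(D,Γ)} = SD_η({Z \ A : A ∈ D}, {Z \ A : A ∈ Γ}). -/
/-- The separated difference of the families `(U_{μ,n})`, `(A_{μ,n})` (for `μ < η`,
`n ∈ ω`) and the set `A*`:
`⋃_{μ<η,n} (A_{μ,n} ∩ U_{μ,n} \ ⋃_{μ'<μ,m} U_{μ',m}) ∪ (A* \ ⋃_{μ<η,n} U_{μ,n})`. -/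
def SDset {Z : Type*} (η : Ordinal.{0})
    (U A : Set.Iio η → ℕ → Set Z) (Astar : Set Z) : Set Z :=
  (⋃ (μ : Set.Iio η), ⋃ (n : ℕ),
      ((A μ n ∩ U μ n) \
        ⋃ (μ' : Set.Iio η), ⋃ (_ : (μ' : Ordinal) < (μ : Ordinal)), ⋃ (m : ℕ), U μ' m)) ∪
    (Astar \ ⋃ (μ : Set.Iio η), ⋃ (n : ℕ), U μ n)

/-- The class `SD_η(D, Γ)` of separated differences: all sets `SDset η U A A*` where
each `U_{μ,n}` is open, for each `μ` the sets `(U_{μ,n})ₙ` are pairwise disjoint,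
each `A_{μ,n} ∈ D`, and `A* ∈ Γ`. -/
def SDclass {Z : Type*} [TopologicalSpace Z] (η : Ordinal.{0})
    (D G : Set (Set Z)) : Set (Set Z) :=
  {s | ∃ (U A : Set.Iio η → ℕ → Set Z) (Astar : Set Z),
    (∀ μ n, IsOpen (U μ n)) ∧
    (∀ μ, Pairwise (Function.onFun Disjoint (U μ))) ∧
    (∀ μ n, A μ n ∈ D) ∧ Astar ∈ G ∧ s = SDset η U A Astar}

lemma mem_SDset_iff {Z : Type*} {η : Ordinal.{0}}
    {U : Set.Iio η → ℕ → Set Z} (A : Set.Iio η → ℕ → Set Z) (Astar : Set Z)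
    (hdisj : ∀ μ, Pairwise (Function.onFun Disjoint (U μ))) {x : Z}
    {μ : Set.Iio η} {n : ℕ} (hxU : x ∈ U μ n)
    (hmin : ∀ μ' m, x ∈ U μ' m → ¬ (μ' : Ordinal) < (μ : Ordinal)) :
    x ∈ SDset η U A Astar ↔ x ∈ A μ n := by
  constructor
  · rintro (h | h)
    · simp only [Set.mem_iUnion, Set.mem_diff, Set.mem_inter_iff] at h
      obtain ⟨μ', n', ⟨hA, hU⟩, hnot⟩ := h
      have h1 : ¬ (μ' : Ordinal) < (μ : Ordinal) := hmin μ' n' hU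
      have h2 : ¬ (μ : Ordinal) < (μ' : Ordinal) := by
        intro hlt
        exact hnot ⟨μ, hlt, n, hxU⟩
      have hμ : μ' = μ := Subtype.ext (le_antisymm (not_lt.1 h2) (not_lt.1 h1))
      subst hμ
      have hn : n' = n := by
        by_contra hne
        exact (hdisj μ' hne).le_bot ⟨hU, hxU⟩
      subst hn; exact hA
    · exact absurd (Set.mem_iUnion.2 ⟨μ, Set.mem_iUnion.2 ⟨n, hxU⟩⟩) h.2
  · intro hA
    left
    refine Set.mem_iUnion.2 ⟨μ, Set.mem_iUnion.2 ⟨n, ⟨hA, hxU⟩, ?_⟩⟩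
    simp only [Set.mem_iUnion, not_exists]
    intro μ' hlt m hU
    exact hmin μ' m hU hlt

lemma mem_SDset_iff_of_not {Z : Type*} {η : Ordinal.{0}}
    {U : Set.Iio η → ℕ → Set Z} (A : Set.Iio η → ℕ → Set Z) (Astar : Set Z)
    {x : Z} (hx : ∀ μ n, x ∉ U μ n) :
    x ∈ SDset η U A Astar ↔ x ∈ Astar := by
  constructor
  · rintro (h | h)
    · simp only [Set.mem_iUnion, Set.mem_diff, Set.mem_inter_iff] at h
      obtain ⟨μ, n, ⟨_, hU⟩, _⟩ := h
      exact absurd hU (hx μ n)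
    · exact h.1
  · intro h
    right
    refine ⟨h, ?_⟩
    simp only [Set.mem_iUnion, not_exists]
    exact hx

lemma compl_SDset {Z : Type*} {η : Ordinal.{0}}
    (U A : Set.Iio η → ℕ → Set Z) (Astar : Set Z)
    (hdisj : ∀ μ, Pairwise (Function.onFun Disjoint (U μ))) :
    (SDset η U A Astar)ᶜ = SDset η U (fun μ n => (A μ n)ᶜ) Astarᶜ := by
  ext x
  by_cases hW : ∃ μ n, x ∈ U μ n
  · obtain ⟨μ₀, hμ₀⟩ := hW
    obtain ⟨μ, ⟨n, hxU⟩, hmin⟩ :=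
      (wellFounded_lt (α := Set.Iio η)).has_min {μ | ∃ n, x ∈ U μ n} ⟨μ₀, hμ₀⟩
    have hmin' : ∀ μ' m, x ∈ U μ' m → ¬ (μ' : Ordinal) < (μ : Ordinal) := by
      intro μ' m h hlt
      exact hmin μ' ⟨m, h⟩ (by exact_mod_cast hlt)
    rw [Set.mem_compl_iff, mem_SDset_iff A Astar hdisj hxU hmin',
      mem_SDset_iff (fun μ n => (A μ n)ᶜ) Astarᶜ hdisj hxU hmin']
    rfl
  · push_neg at hW
    rw [Set.mem_compl_iff, mem_SDset_iff_of_not A Astar hW,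
      mem_SDset_iff_of_not _ Astarᶜ hW]
    rfl


/-- Duality of separated differences: the dual of `SD_η(D, Γ)` is
`SD_η(dual D, dual Γ)`. -/
theorem statement19 {Z : Type*} [TopologicalSpace Z]
    [TopologicalSpace.MetrizableSpace Z] [TopologicalSpace.SeparableSpace Z]
    (η : Ordinal.{0}) (hη : 1 ≤ η) (hcount : η.card ≤ Cardinal.aleph0)
    (D G : Set (Set Z)) :
    (fun s : Set Z => sᶜ) '' SDclass η D G =
      SDclass η ((fun s : Set Z => sᶜ) '' D) ((fun s : Set Z => sᶜ) '' G) := by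
  ext s
  constructor
  · rintro ⟨t, ⟨U, A, Astar, h1, h2, h3, h4, rfl⟩, rfl⟩
    exact ⟨U, fun μ n => (A μ n)ᶜ, Astarᶜ, h1, h2,
      fun μ n => ⟨A μ n, h3 μ n, rfl⟩, ⟨Astar, h4, rfl⟩, compl_SDset U A Astar h2⟩
  · rintro ⟨U, A, Astar, h1, h2, h3, h4, rfl⟩
    obtain ⟨Bs, hBs, hBsc⟩ := h4
    choose B hB hBc using h3
    refine ⟨SDset η U B Bs, ⟨U, B, Bs, h1, h2, hB, hBs, rfl⟩, ?_⟩
    show (SDset η U B Bs)ᶜ = _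
    rw [compl_SDset U B Bs h2]
    have hA : A = fun μ n => (B μ n)ᶜ := by funext μ n; exact (hBc μ n).symm
    have hAs : Astar = Bsᶜ := hBsc.symm
    rw [hA, hAs]
end
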